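/- arXiv:math/9805145 — 3 statements merged into one kernel-verified Lean document; each statement's English description precedes it below -/
import Mathlib

section
/- Let κ be an infinite set, D an ultrafilter on κ, and B_i (i ∈ κ) Boolean algebras. Then |∏_{i∈κ} Length⁺(B_i)/D| ≤ Length⁺(∏_{i∈κ} B_i/D), where ∏_{i∈κ} Length⁺(B_i)/D denotes the set-ultraproduct of the cardinals Length⁺(B_i). -/
/-!
Realise each `Length⁺(B i)` as its initial ordinal. A proper initial segment of the `i`-th
factor is then smaller than `Length⁺(B i)`, so it injects into a chain of `B i`. Hence an
initial segment of the (linearly ordered) ultraproduct of these ordinals injects into the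
ultraproduct of those chains, which is a chain of `∏ B i / D`, and so has size
`< Length⁺(∏ B i / D)`. Finally, a linear order all of whose initial segments have size `< C`
has size `≤ C`: a subset of size `C` has no strict upper bound, so for infinite `C` the order is
the union of `C` initial segments of size `≤ C`, and for finite `C` it is finite and hence has
a greatest element.
-/

open Cardinal Filter

universe u

namespace ShSi641

variable {ι : Type u}

/-- The set-theoretic ultraproduct `∏_{i} B i / D`. -/
def UProd (D : Ultrafilter ι) (B : ι → Type u) : Type u :=
  Quotient ((D : Filter ι).productSetoid B)

namespace UProd

variable {D : Ultrafilter ι} {B : ι → Type u}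

/-- The equivalence class `f/D` of `f ∈ ∏_i B i`. -/
def mk (D : Ultrafilter ι) (f : ∀ i, B i) : UProd D B :=
  Quotient.mk ((D : Filter ι).productSetoid B) f

@[elab_as_elim]
theorem ind {motive : UProd D B → Prop} (h : ∀ f : ∀ i, B i, motive (mk D f)) :
    ∀ x : UProd D B, motive x :=
  Quotient.ind h

/-- Lift of a family of binary relations to the ultraproduct. -/
def uRel (D : Ultrafilter ι) {B : ι → Type u} (r : ∀ i, B i → B i → Prop) :
    UProd D B → UProd D B → Prop :=
  Quotient.lift₂ (fun f g => ∀ᶠ i in (D : Filter ι), r i (f i) (g i))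
    (fun _ _ _ _ hf hg => propext <| eventually_congr <|
      (hf.and hg).mono fun _ ⟨hf', hg'⟩ => by rw [hf', hg'])

theorem uRel_mk {r : ∀ i, B i → B i → Prop} {f g : ∀ i, B i} :
    uRel D r (mk D f) (mk D g) ↔ ∀ᶠ i in (D : Filter ι), r i (f i) (g i) :=
  Iff.rfl

section BA

variable [∀ i, BooleanAlgebra (B i)]

/-- Pointwise binary operations descend to the ultraproduct. -/
def map₂ (op : ∀ i, B i → B i → B i) : UProd D B → UProd D B → UProd D B :=
  Quotient.map₂ (fun f g i => op i (f i) (g i))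
    (fun _ _ hf _ _ hg => (hf.and hg).mono fun _ ⟨hf', hg'⟩ => by
      dsimp only; rw [hf', hg'])

def map₁ (op : ∀ i, B i → B i) : UProd D B → UProd D B :=
  Quotient.map (fun f i => op i (f i))
    (fun _ _ hf => hf.mono fun _ hf' => by dsimp only; rw [hf'])

instance instPartialOrder : PartialOrder (UProd D B) where
  le := uRel D fun _ x y => x ≤ y
  le_refl x := ind (fun f => Eventually.of_forall fun i => le_refl (f i)) x
  le_trans x y z := Quotient.inductionOn₃ x y z fun _ _ _ h1 h2 =>
    (h1.and h2).mono fun _ ⟨a, b⟩ => a.trans b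
  le_antisymm x y := Quotient.inductionOn₂ x y fun _ _ h1 h2 =>
    Quotient.sound <| (h1.and h2).mono fun _ ⟨a, b⟩ => le_antisymm a b

instance instBooleanAlgebra : BooleanAlgebra (UProd D B) where
  sup := map₂ fun _ x y => x ⊔ y
  inf := map₂ fun _ x y => x ⊓ y
  compl := map₁ fun _ x => xᶜ
  sdiff := map₂ fun _ x y => x \ y
  himp := map₂ fun _ x y => x ⇨ y
  top := mk D fun _ => ⊤
  bot := mk D fun _ => ⊥
  le_sup_left x y := Quotient.inductionOn₂ x y fun _ _ =>
    Eventually.of_forall fun _ => le_sup_left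
  le_sup_right x y := Quotient.inductionOn₂ x y fun _ _ =>
    Eventually.of_forall fun _ => le_sup_right
  sup_le x y z := Quotient.inductionOn₃ x y z fun _ _ _ h1 h2 =>
    (h1.and h2).mono fun _ ⟨a, b⟩ => sup_le a b
  inf_le_left x y := Quotient.inductionOn₂ x y fun _ _ =>
    Eventually.of_forall fun _ => inf_le_left
  inf_le_right x y := Quotient.inductionOn₂ x y fun _ _ =>
    Eventually.of_forall fun _ => inf_le_right
  le_inf x y z := Quotient.inductionOn₃ x y z fun _ _ _ h1 h2 =>
    (h1.and h2).mono fun _ ⟨a, b⟩ => le_inf a b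
  le_sup_inf x y z := Quotient.inductionOn₃ x y z fun _ _ _ =>
    Eventually.of_forall fun _ => le_sup_inf
  inf_compl_le_bot x := ind (fun _ => Eventually.of_forall fun _ => inf_compl_eq_bot.le) x
  top_le_sup_compl x := ind (fun _ => Eventually.of_forall fun _ => sup_compl_eq_top.ge) x
  le_top x := ind (fun _ => Eventually.of_forall fun _ => le_top) x
  bot_le x := ind (fun _ => Eventually.of_forall fun _ => bot_le) x
  sdiff_eq x y := Quotient.inductionOn₂ x y fun _ _ =>
    Quotient.sound <| Eventually.of_forall fun _ => sdiff_eq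
  himp_eq x y := Quotient.inductionOn₂ x y fun _ _ =>
    Quotient.sound <| Eventually.of_forall fun _ => himp_eq

end BA

end UProd

/-- `Length(B)`: the sup of cardinalities of subsets of `B` linearly ordered
by the Boolean partial order. -/
noncomputable def baLength (B : Type u) [BooleanAlgebra B] : Cardinal.{u} :=
  ⨆ X : {X : Set B // IsChain (· ≤ ·) X}, #X.1

/-- `Length⁺(B)`: the sup of the cardinal successors of cardinalities of subsets of `B`
linearly ordered by the Boolean partial order. -/
noncomputable def baLengthPlus (B : Type u) [BooleanAlgebra B] : Cardinal.{u} :=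
  ⨆ X : {X : Set B // IsChain (· ≤ ·) X}, Order.succ #X.1


/-- A cardinal is weakly inaccessible if it is an uncountable regular limit cardinal. -/
def IsWeaklyInaccessible (c : Cardinal.{u}) : Prop :=
  Cardinal.aleph0 < c ∧ c.IsRegular ∧ Order.IsSuccLimit c

/-- A (strict) order is `λ`-like if its carrier has cardinality `λ` while every
proper initial segment has cardinality `< λ`. -/
def IsLambdaLike {α : Type u} (r : α → α → Prop) (lam : Cardinal.{u}) : Prop :=
  #α = lam ∧ ∀ x : α, #{y : α // r y x} < lam

/-- An antichain of a Boolean algebra: a set of pairwise disjoint nonzero elements. -/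
def IsBAAntichain {B : Type u} [BooleanAlgebra B] (X : Set B) : Prop :=
  (∀ x ∈ X, x ≠ ⊥) ∧ X.Pairwise fun x y => x ⊓ y = ⊥

/-- The cellularity `c(B)` of a Boolean algebra. -/
noncomputable def baCellularity (B : Type u) [BooleanAlgebra B] : Cardinal.{u} :=
  ⨆ X : {X : Set B // IsBAAntichain X}, #X.1

/-- `c⁺(B)`, the sup of successors of cardinalities of antichains. -/
noncomputable def baCellularityPlus (B : Type u) [BooleanAlgebra B] : Cardinal.{u} :=
  ⨆ X : {X : Set B // IsBAAntichain X}, Order.succ #X.1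

/-- A subset of a Boolean algebra which is well-ordered by the Boolean order. -/
def IsWellOrderedChain {B : Type u} [BooleanAlgebra B] (X : Set B) : Prop :=
  IsChain (· ≤ ·) X ∧ X.WellFoundedOn (· < ·)

/-- The depth of a Boolean algebra. -/
noncomputable def baDepth (B : Type u) [BooleanAlgebra B] : Cardinal.{u} :=
  ⨆ X : {X : Set B // IsWellOrderedChain X}, #X.1

/-- `Depth⁺(B)`. -/
noncomputable def baDepthPlus (B : Type u) [BooleanAlgebra B] : Cardinal.{u} :=
  ⨆ X : {X : Set B // IsWellOrderedChain X}, Order.succ #X.1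

/-- The set `S` is a subalgebra of the Boolean algebra `B` (as a set). -/
def IsSubalgebraSet {B : Type u} [BooleanAlgebra B] (S : Set B) : Prop :=
  ⊥ ∈ S ∧ ⊤ ∈ S ∧ (∀ x ∈ S, xᶜ ∈ S) ∧ (∀ x ∈ S, ∀ y ∈ S, x ⊔ y ∈ S) ∧
    ∀ x ∈ S, ∀ y ∈ S, x ⊓ y ∈ S

/-- `C` is a closed unbounded subset of the ordinal `l`. -/
def ClubIn (C : Set Ordinal.{u}) (l : Ordinal.{u}) : Prop :=
  C ⊆ Set.Iio l ∧ (∀ α < l, ∃ β ∈ C, α ≤ β) ∧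
    ∀ δ < l, δ ≠ 0 → (∀ α < δ, ∃ β ∈ C, α ≤ β ∧ β < δ) → δ ∈ C

/-- `S` is a stationary subset of the ordinal `l`: it meets every club of `l`. -/
def StationaryIn (S : Set Ordinal.{u}) (l : Ordinal.{u}) : Prop :=
  ∀ C, ClubIn C l → (S ∩ C).Nonempty

open Set

theorem mk_Iic_le_of_mk_Iio_lt {α : Type u} [LinearOrder α] {C : Cardinal.{u}} {x : α}
    (h : #(Iio x) < C) : #(Iic x) ≤ C := by
  rw [← Iio_insert]
  exact mk_insert_le.trans (add_one_le_of_lt h)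

theorem mk_le_of_forall_mk_Iio_lt {α : Type u} [LinearOrder α] {C : Cardinal.{u}}
    (h : ∀ x : α, #(Iio x) < C) : #α ≤ C := by
  have hIic : ∀ x : α, #(Iic x) ≤ C := fun x => mk_Iic_le_of_mk_Iio_lt (h x)
  by_cases hfin : Finite α
  · rcases isEmpty_or_nonempty α with _ | _
    · simp
    obtain ⟨m, hm⟩ := Finite.exists_max (id : α → α)
    rw [← mk_univ, ← show Iic m = Set.univ from eq_univ_of_forall hm]
    exact hIic m
  by_contra! hlt
  obtain ⟨T, hT⟩ := le_mk_iff_exists_set.mp hlt.le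
  -- a strict upper bound `a` of `T` would give `C = #T ≤ #(Iio a)`
  have hcover : ⋃ t : T, Iic t.1 = Set.univ := by
    refine eq_univ_of_forall fun a => ?_
    by_contra ha
    simp only [mem_iUnion, mem_Iic, not_exists, not_le] at ha
    exact (h a).not_ge (hT ▸ mk_le_mk_of_subset fun t ht => ha ⟨t, ht⟩)
  have hsq : #α ≤ C * C := calc
    #α = #(⋃ t : T, Iic t.1) := by rw [hcover, mk_univ]
    _ ≤ #T * ⨆ t : T, #(Iic t.1) := mk_iUnion_le _
    _ ≤ C * C := by rw [hT]; gcongr; exact ciSup_le' fun t => hIic t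
  rcases lt_or_ge C ℵ₀ with hC | hC
  · exact hfin (lt_aleph0_iff_finite.mp (hsq.trans_lt (mul_lt_aleph0 hC hC)))
  · exact hlt.not_ge (hsq.trans (mul_eq_self hC).le)

namespace UProd

variable {D : Ultrafilter ι} {B : ι → Type u}

theorem mk_out (x : UProd D B) : mk D x.out = x :=
  Quotient.out_eq x

section Map

variable {A C : ι → Type u}

def map (φ : ∀ i, A i → C i) : UProd D A → UProd D C :=
  Quotient.map (fun f i => φ i (f i)) fun _ _ h => h.mono fun i hi => congrArg (φ i) hi

theorem map_injective {φ : ∀ i, A i → C i} (hφ : ∀ i, Function.Injective (φ i)) :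
    Function.Injective (map (D := D) φ) := by
  refine fun x y => Quotient.inductionOn₂ x y fun f g h => Quotient.sound ?_
  exact (Quotient.exact h).mono fun i hi => hφ i hi

theorem mk_le_mk_of_forall_mk_le (h : ∀ i, #(A i) ≤ #(C i)) :
    #(UProd D A) ≤ #(UProd D C) := by
  have e (i : ι) : A i ↪ C i := ((le_def _ _).mp (h i)).some
  exact mk_le_of_injective (map_injective (D := D) fun i => (e i).injective)

end Map

section LinearOrder

variable {P : ι → Type u} [∀ i, LinearOrder (P i)]

noncomputable instance instLinearOrder : LinearOrder (UProd D P) where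
  le := uRel D fun _ x y => x ≤ y
  le_refl x := ind (fun f => Eventually.of_forall fun i => le_refl (f i)) x
  le_trans x y z := Quotient.inductionOn₃ x y z fun _ _ _ h1 h2 =>
    (h1.and h2).mono fun _ ⟨a, b⟩ => a.trans b
  le_antisymm x y := Quotient.inductionOn₂ x y fun _ _ h1 h2 =>
    Quotient.sound <| (h1.and h2).mono fun _ ⟨a, b⟩ => le_antisymm a b
  le_total x y := Quotient.inductionOn₂ x y fun _ _ =>
    Ultrafilter.eventually_or.mp (Eventually.of_forall fun _ => le_total _ _)
  toDecidableLE := Classical.decRel _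

theorem mk_le_mk {f g : ∀ i, P i} : mk D f ≤ mk D g ↔ ∀ᶠ i in (D : Filter ι), f i ≤ g i :=
  Iff.rfl

theorem mk_lt_mk {f g : ∀ i, P i} : mk D f < mk D g ↔ ∀ᶠ i in (D : Filter ι), f i < g i := by
  rw [lt_iff_le_not_ge, mk_le_mk, mk_le_mk, ← Ultrafilter.eventually_not]
  simp only [not_le]
  exact ⟨And.right, fun h => ⟨h.mono fun _ => le_of_lt, h⟩⟩

theorem mk_Iio_mk_le {C : ι → Type u} [∀ i, Nonempty (C i)] (f : ∀ i, P i)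
    (h : ∀ i, #(Iio (f i)) ≤ #(C i)) : #(Iio (mk D f)) ≤ #(UProd D C) := by
  classical
  have e (i : ι) : Iio (f i) ↪ C i := ((le_def _ _).mp (h i)).some
  let g (y : ∀ i, P i) (i : ι) : C i :=
    if hy : y i < f i then e i ⟨y i, hy⟩ else Classical.arbitrary _
  have hlt (y : Iio (mk D f)) : ∀ᶠ i in (D : Filter ι), y.1.out i < f i :=
    mk_lt_mk.mp ((mk_out y.1).symm ▸ y.2)
  refine mk_le_of_injective (f := fun y : Iio (mk D f) => mk D (g y.1.out)) fun y y' hyy' => ?_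
  have hout : ∀ᶠ i in (D : Filter ι), y.1.out i = y'.1.out i := by
    filter_upwards [hlt y, hlt y', Quotient.exact hyy'] with i hi hi' hg
    simp only [g, hi, hi', dif_pos] at hg
    exact congrArg Subtype.val ((e i).injective hg)
  exact Subtype.ext <| by rw [← mk_out y.1, ← mk_out y'.1]; exact Quotient.sound hout

end LinearOrder

end UProd

section Length

variable {B : Type u} [BooleanAlgebra B]

theorem mk_lt_baLengthPlus_of_isChain {X : Set B} (hX : IsChain (· ≤ ·) X) :
    #X < baLengthPlus B :=
  (Order.lt_succ _).trans_le <|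
    le_ciSup bddAbove_of_small (⟨X, hX⟩ : {X : Set B // IsChain (· ≤ ·) X})

theorem exists_isChain_nonempty_le_mk_of_lt_baLengthPlus {c : Cardinal.{u}}
    (hc : c < baLengthPlus B) : ∃ X : Set B, IsChain (· ≤ ·) X ∧ X.Nonempty ∧ c ≤ #X := by
  obtain ⟨⟨X, hX⟩, hcX⟩ := exists_lt_of_lt_ciSup' hc
  refine ⟨insert ⊥ X, hX.insert fun _ _ _ => Or.inl bot_le, insert_nonempty _ _, ?_⟩
  exact (Order.lt_succ_iff.mp hcX).trans (mk_le_mk_of_subset (subset_insert _ _))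

end Length

section UltraproductLength

variable {D : Ultrafilter ι} {B : ι → Type u} [∀ i, BooleanAlgebra (B i)]

theorem isChain_range_map_val {X : ∀ i, Set (B i)} (hX : ∀ i, IsChain (· ≤ ·) (X i)) :
    IsChain (· ≤ ·) (range (UProd.map (D := D) fun i => ((↑) : X i → B i))) := by
  rintro _ ⟨x, rfl⟩ _ ⟨y, rfl⟩ -
  induction x using UProd.ind with | h f => ?_
  induction y using UProd.ind with | h g => ?_
  exact Ultrafilter.eventually_or.mp <| Eventually.of_forall fun i =>
    (hX i).total (f i).2 (g i).2

theorem mk_uprod_lt_baLengthPlus {X : ∀ i, Set (B i)} (hX : ∀ i, IsChain (· ≤ ·) (X i)) :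
    #(UProd D fun i => X i) < baLengthPlus (UProd D B) := by
  rw [← mk_range_eq _ (UProd.map_injective fun i => Subtype.val_injective)]
  exact mk_lt_baLengthPlus_of_isChain (isChain_range_map_val hX)

theorem mk_Iio_lt_baLengthPlus {P : ι → Type u} [∀ i, LinearOrder (P i)]
    (hP : ∀ i (x : P i), #(Iio x) < baLengthPlus (B i)) (x : UProd D P) :
    #(Iio x) < baLengthPlus (UProd D B) := by
  induction x using UProd.ind with | h f => ?_
  choose X hX hne hle using fun i =>
    exists_isChain_nonempty_le_mk_of_lt_baLengthPlus (hP i (f i))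
  have (i : ι) : Nonempty (X i) := (hne i).to_subtype
  exact (UProd.mk_Iio_mk_le f hle).trans_lt (mk_uprod_lt_baLengthPlus hX)

end UltraproductLength

theorem statement_1_general {ι : Type u} (D : Ultrafilter ι)
    (B : ι → Type u) [∀ i, BooleanAlgebra (B i)] :
    #(UProd D fun i => (baLengthPlus (B i)).out) ≤ baLengthPlus (UProd D B) :=
  calc #(UProd D fun i => (baLengthPlus (B i)).out)
      ≤ #(UProd D fun i => (baLengthPlus (B i)).ord.ToType) :=
        UProd.mk_le_mk_of_forall_mk_le fun i => by rw [mk_out, mk_ord_toType]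
    _ ≤ baLengthPlus (UProd D B) :=
        mk_le_of_forall_mk_Iio_lt <| mk_Iio_lt_baLengthPlus fun i x => by
          simpa using mk_Iio_lt x (by simp)

/-- `|∏ Length⁺(B_i) / D| ≤ Length⁺(∏ B_i / D)`. -/
theorem statement_1 {ι : Type u} [Infinite ι] (D : Ultrafilter ι)
    (B : ι → Type u) [∀ i, BooleanAlgebra (B i)] :
    #(UProd D fun i => (baLengthPlus (B i)).out) ≤ baLengthPlus (UProd D B) :=
  statement_1_general D B

end ShSi641
end

section
/- For every weakly inaccessible cardinal θ there exists a Boolean algebra B of cardinality θ such that for every cardinal μ < θ there is a subset X ⊆ B linearly ordered by the Boolean order with |X| = μ, while every linearly ordered subset of B has cardinality < θ; in other words, Length(B) = Length⁺(B) = θ and the supremum in the definition of Length is not attained. -/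
/-!
The algebra is the weak product of the interval algebras `A_i` of the initial segments `[0, i)`,
`i < θ`: the elements that are eventually `⊥` or eventually `⊤` along the cofinite filter.
Each `A_i` has size `max ℵ₀ |i| < θ` and contains the chain of rays `[a, i)` of size `|i|`, so every
`μ < θ` is the size of a chain. Conversely, along a chain the finite supports `{i | f i ≠ ⊥}` (of
the elements, or of their complements) again form a chain, hence there are only countably many of
them, and each support carries fewer than `θ` elements; by regularity the chain has size `< θ`.
As `θ` is a limit cardinal, these chain sizes have supremum `θ`, which is therefore not attained.
-/

open Cardinal Filter

universe u

open Set

namespace BooleanSubalgebra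

theorem mk_closure_le {α : Type u} [BooleanAlgebra α] {s : Set α} (hs : IsSublattice s)
    (hbot : ⊥ ∈ s) (htop : ⊤ ∈ s) : #(closure s) ≤ max ℵ₀ #s := by
  classical
  have hsurj : Function.Surjective fun t : Finset (s × s) =>
      (⟨t.sup fun x ↦ x.1.1 \ x.2.1, (mem_closure_iff_sup_sdiff hs hbot htop).2 ⟨t, rfl⟩⟩ :
        closure s) := by
    rintro ⟨a, ha⟩
    obtain ⟨t, rfl⟩ := (mem_closure_iff_sup_sdiff hs hbot htop).1 ha
    exact ⟨t, rfl⟩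
  calc #(closure s) ≤ #(Finset (s × s)) := mk_le_of_surjective hsurj
    _ ≤ #(List (s × s)) := mk_le_of_surjective List.toFinset_surjective
    _ ≤ max ℵ₀ (#s * #s) := by rw [mul_def]; exact mk_list_le_max _
    _ ≤ max ℵ₀ #s := by simpa [max_comm] using max_le_max_left ℵ₀ (mul_le_max #s #s)

variable {ι : Type*} {α : ι → Type*} [∀ i, BooleanAlgebra (α i)]

def weakPi (l : Filter ι) : BooleanSubalgebra (Π i, α i) where
  carrier := {f | (∀ᶠ i in l, f i = ⊥) ∨ ∀ᶠ i in l, f i = ⊤}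
  supClosed' := by
    rintro f (hf | hf) g (hg | hg)
    · exact Or.inl ((hf.and hg).mono fun _ h => by simp [h.1, h.2])
    · exact Or.inr (hg.mono fun _ h => by simp [h])
    · exact Or.inr (hf.mono fun _ h => by simp [h])
    · exact Or.inr (hf.mono fun _ h => by simp [h])
  infClosed' := by
    rintro f (hf | hf) g (hg | hg)
    · exact Or.inl (hf.mono fun _ h => by simp [h])
    · exact Or.inl (hf.mono fun _ h => by simp [h])
    · exact Or.inl (hg.mono fun _ h => by simp [h])
    · exact Or.inr ((hf.and hg).mono fun _ h => by simp [h.1, h.2])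
  compl_mem' := by
    rintro f (hf | hf)
    · exact Or.inr (hf.mono fun _ h => by simp [h])
    · exact Or.inl (hf.mono fun _ h => by simp [h])
  bot_mem' := Or.inl (.of_forall fun _ => rfl)

theorem mem_weakPi_cofinite {f : Π i, α i} :
    f ∈ weakPi cofinite ↔ {i | f i ≠ ⊥}.Finite ∨ {i | fᶜ i ≠ ⊥}.Finite := by
  simp only [Pi.compl_apply, ne_eq, compl_eq_bot]
  exact Iff.rfl

def weakPiSingle [DecidableEq ι] (i : ι) : α i ↪o weakPi (α := α) cofinite :=
  OrderEmbedding.ofMapLEIff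
    (fun x => ⟨Function.update ⊥ i x, Or.inl <| eventually_cofinite.2 <|
      (finite_singleton i).subset fun _ hj =>
        by_contra fun hji => hj (Function.update_of_ne hji _ _)⟩)
    fun _ _ => update_le_update_iff'

end BooleanSubalgebra

theorem Set.Ici_union_Ici {γ : Type*} [LinearOrder γ] (a b : γ) :
    Ici a ∪ Ici b = Ici (min a b) := by
  ext
  simp

section IntervalAlgebra

variable (γ : Type u) [LinearOrder γ]

/-- `∅` and `univ` make the rays a bounded sublattice, which keeps the algebra they generate small
(`BooleanSubalgebra.mk_closure_le`). -/
def rays : Set (Set γ) := insert ∅ (insert Set.univ (range Ici))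

def intervalAlgebra : BooleanSubalgebra (Set γ) := BooleanSubalgebra.closure (rays γ)

variable {γ}

theorem isSublattice_rays : IsSublattice (rays γ) := by
  constructor
  · rintro _ (rfl | rfl | ⟨a, rfl⟩) _ (rfl | rfl | ⟨b, rfl⟩) <;>
      simp [rays, Ici_union_Ici]
  · rintro _ (rfl | rfl | ⟨a, rfl⟩) _ (rfl | rfl | ⟨b, rfl⟩) <;>
      simp [rays, Ici_inter_Ici]

theorem mk_intervalAlgebra_le : #(intervalAlgebra γ) ≤ max ℵ₀ #γ := by
  have hrays : #(rays γ) ≤ #γ + 1 + 1 :=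
    mk_insert_le.trans <| add_le_add_left (mk_insert_le.trans <| add_le_add_left mk_range_le _) _
  refine (BooleanSubalgebra.mk_closure_le isSublattice_rays (by simp [rays])
    (by simp [rays])).trans (max_le (le_max_left _ _) (hrays.trans ?_))
  rcases lt_or_ge #γ ℵ₀ with h | h
  · exact (add_lt_aleph0 (add_lt_aleph0 h one_lt_aleph0) one_lt_aleph0).le.trans (le_max_left _ _)
  · rw [add_one_of_aleph0_le h, add_one_of_aleph0_le h]
    exact le_max_right _ _

theorem exists_isChain_intervalAlgebra :
    ∃ X : Set (intervalAlgebra γ), IsChain (· ≤ ·) X ∧ #X = #γ := by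
  let ray (a : γ) : intervalAlgebra γ :=
    ⟨Ici a, BooleanSubalgebra.subset_closure (by simp [rays])⟩
  have ray_injective : Function.Injective ray := fun _ _ h =>
    Ici_injective (congrArg Subtype.val h)
  refine ⟨range ray, ?_, mk_range_eq _ ray_injective⟩
  rintro _ ⟨a, rfl⟩ _ ⟨b, rfl⟩ -
  exact (le_total a b).symm.imp Ici_subset_Ici.2 Ici_subset_Ici.2

end IntervalAlgebra

theorem IsChain.countable_of_finite {ι : Type*} {R : Set (Set ι)} (hR : IsChain (· ⊆ ·) R)
    (hfin : ∀ s ∈ R, s.Finite) : R.Countable := by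
  refine Set.countable_iff_exists_injective.2 ⟨fun s => s.1.ncard, fun s t hst => Subtype.ext ?_⟩
  rcases hR.total s.2 t.2 with h | h
  · exact eq_of_subset_of_ncard_le h hst.ge (hfin t t.2)
  · exact (eq_of_subset_of_ncard_le h hst.le (hfin s s.2)).symm

namespace Cardinal

variable {ι : Type u} {α : ι → Type u} {θ : Cardinal.{u}}

theorem mk_pi_lt_of_finite [Finite ι] (hθ : ℵ₀ ≤ θ) (hα : ∀ i, #(α i) < θ) :
    #(Π i, α i) < θ := by
  have := Fintype.ofFinite ι
  rw [mk_pi, prod_eq_of_fintype, lift_id]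
  exact Finset.prod_induction _ (· < θ) (fun _ _ => mul_lt_of_lt hθ)
    (one_lt_aleph0.trans_le hθ) fun i _ => hα i

section Support

variable [∀ i, Bot (α i)]

theorem mk_setOf_support_subset_lt (hθ : ℵ₀ ≤ θ) (hα : ∀ i, #(α i) < θ) {s : Set ι}
    (hs : s.Finite) : #{f : Π i, α i | {i | f i ≠ ⊥} ⊆ s} < θ := by
  have := hs.to_subtype
  have hrestrict : Function.Injective
      fun f : {f : Π i, α i | {i | f i ≠ ⊥} ⊆ s} => fun i : s => f.1 i := by
    refine fun f g hfg => Subtype.ext <| funext fun i => ?_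
    by_cases hi : i ∈ s
    · exact congrFun hfg ⟨i, hi⟩
    · rw [of_not_not fun h => hi (f.2 h), of_not_not fun h => hi (g.2 h)]
  exact (mk_le_of_injective hrestrict).trans_lt (mk_pi_lt_of_finite hθ fun i => hα i)

theorem mk_setOf_support_finite_le (hθ : ℵ₀ ≤ θ) (hι : #ι ≤ θ) (hα : ∀ i, #(α i) < θ) :
    #{f : Π i, α i | {i | f i ≠ ⊥}.Finite} ≤ θ := by
  classical
  have hcover : {f : Π i, α i | {i | f i ≠ ⊥}.Finite} ⊆
      ⋃ t : Finset ι, {f | {i | f i ≠ ⊥} ⊆ t} :=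
    fun f hf => mem_iUnion.2 ⟨hf.toFinset, by simp⟩
  calc _ ≤ #(Finset ι) * ⨆ t : Finset ι, #{f : Π i, α i | {i | f i ≠ ⊥} ⊆ t} :=
        (mk_le_mk_of_subset hcover).trans (mk_iUnion_le _)
    _ ≤ θ * θ := by
      gcongr
      · calc #(Finset ι) ≤ #(List ι) := mk_le_of_surjective List.toFinset_surjective
          _ ≤ θ := (mk_list_le_max ι).trans (max_le hθ hι)
      · exact ciSup_le' fun t => (mk_setOf_support_subset_lt hθ hα t.finite_toSet).le
    _ = θ := mul_eq_self hθ

end Support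

theorem mk_lt_of_isChain_of_support_finite [∀ i, PartialOrder (α i)] [∀ i, OrderBot (α i)]
    (hθ : θ.IsRegular) (hθ₀ : ℵ₀ < θ) (hα : ∀ i, #(α i) < θ) {X : Set (Π i, α i)}
    (hX : IsChain (· ≤ ·) X) (hfin : ∀ f ∈ X, {i | f i ≠ ⊥}.Finite) : #X < θ := by
  let supp (f : Π i, α i) : Set ι := {i | f i ≠ ⊥}
  have hsupp : (supp '' X).Countable :=
    (hX.image_of_map_rel _ _ supp fun f g hfg _ hi => ne_bot_of_le_ne_bot hi (hfg _))
      |>.countable_of_finite (by rintro _ ⟨f, hf, rfl⟩; exact hfin f hf)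
  calc #X ≤ #(⋃ s ∈ supp '' X, {f | supp f ⊆ s}) :=
        mk_le_mk_of_subset fun f hf =>
          mem_biUnion (mem_image_of_mem _ hf) (subset_rfl : supp f ⊆ supp f)
    _ < θ := (card_biUnion_lt_iff_forall_of_isRegular hθ
        (hsupp.le_aleph0.trans_lt hθ₀)).2 fun s ⟨f, hf, hs⟩ =>
          mk_setOf_support_subset_lt hθ.aleph0_le hα (hs ▸ hfin f hf)

theorem exists_mk_Iio_ord_toType_eq {c μ : Cardinal.{u}} (h : μ < c) :
    ∃ i : c.ord.ToType, #(Iio i) = μ := by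
  have hμ : μ.ord < Ordinal.type (α := c.ord.ToType) (· < ·) := by
    rwa [Ordinal.type_toType, ord_lt_ord]
  obtain ⟨i, hi⟩ := Ordinal.typein_surj _ hμ
  exact ⟨i, by rw [← card_ord μ, ← hi, Ordinal.card_typein]; rfl⟩

end Cardinal

namespace BooleanSubalgebra

variable {ι : Type u} {α : ι → Type u} [∀ i, BooleanAlgebra (α i)] {θ : Cardinal.{u}}

theorem mk_weakPi_cofinite_le (hθ : ℵ₀ ≤ θ) (hι : #ι ≤ θ) (hα : ∀ i, #(α i) < θ) :
    #(weakPi (α := α) cofinite) ≤ θ := by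
  set A : Set (Π i, α i) := {f | {i | f i ≠ ⊥}.Finite}
  have hA : #A ≤ θ := mk_setOf_support_finite_le hθ hι hα
  calc #(weakPi (α := α) cofinite) ≤ #↥(A ∪ compl ⁻¹' A) :=
        mk_le_mk_of_subset fun f hf => mem_weakPi_cofinite.1 hf
    _ ≤ #A + #(compl ⁻¹' A) := mk_union_le _ _
    _ ≤ θ := add_le_of_le hθ hA ((mk_preimage_of_injective _ _ compl_injective).trans hA)

theorem mk_lt_of_isChain_weakPi_cofinite (hθ : θ.IsRegular) (hθ₀ : ℵ₀ < θ)
    (hα : ∀ i, #(α i) < θ) {X : Set (weakPi (α := α) cofinite)}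
    (hX : IsChain (· ≤ ·) X) : #X < θ := by
  set A : Set (Π i, α i) := {f | {i | f i ≠ ⊥}.Finite}
  set Y : Set (Π i, α i) := Subtype.val '' X
  have hY : IsChain (· ≤ ·) Y := hX.image_of_map_rel _ _ Subtype.val fun _ _ h => h
  have hYA : #↥(Y ∩ A) < θ :=
    mk_lt_of_isChain_of_support_finite hθ hθ₀ hα (hY.mono inter_subset_left) fun f hf => hf.2
  have hYA' : #↥(Y ∩ compl ⁻¹' A) < θ := by
    rw [← mk_image_eq compl_injective]
    refine mk_lt_of_isChain_of_support_finite hθ hθ₀ hα ?_ ?_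
    · exact ((hY.mono inter_subset_left).image_of_map_rel _ (flip (· ≤ ·)) _
        fun _ _ h => compl_le_compl h).symm
    · rintro _ ⟨f, hf, rfl⟩
      exact hf.2
  calc #X = #Y := (mk_image_eq Subtype.val_injective).symm
    _ ≤ #↥(Y ∩ A ∪ Y ∩ compl ⁻¹' A) := by
      refine mk_le_mk_of_subset ?_
      rintro _ ⟨g, hg, rfl⟩
      exact (mem_weakPi_cofinite.1 g.2).imp (⟨⟨g, hg, rfl⟩, ·⟩) (⟨⟨g, hg, rfl⟩, ·⟩)
    _ ≤ #↥(Y ∩ A) + #↥(Y ∩ compl ⁻¹' A) := mk_union_le _ _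
    _ < θ := add_lt_of_lt hθ.aleph0_le hYA hYA'

end BooleanSubalgebra

namespace ShSi641

section Length

variable {B : Type u} [BooleanAlgebra B] {θ : Cardinal.{u}}

theorem baLength_le_mk : baLength B ≤ #B := ciSup_le' fun X => mk_set_le X.1

theorem baLength_eq_of_isChain (hθ : Order.IsSuccLimit θ)
    (hlong : ∀ μ < θ, ∃ X : Set B, IsChain (· ≤ ·) X ∧ #X = μ)
    (hshort : ∀ X : Set B, IsChain (· ≤ ·) X → #X < θ) : baLength B = θ := by
  refine le_antisymm (ciSup_le' fun X => (hshort X.1 X.2).le) (not_lt.1 fun h => ?_)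
  obtain ⟨X, hX, hXc⟩ := hlong _ (hθ.succ_lt h)
  have : #X ≤ baLength B := le_ciSup bddAbove_of_small (⟨X, hX⟩ : {X : Set B // IsChain (· ≤ ·) X})
  exact (Order.lt_succ _).not_ge (hXc ▸ this)

theorem baLengthPlus_eq_of_isChain
    (hlong : ∀ μ < θ, ∃ X : Set B, IsChain (· ≤ ·) X ∧ #X = μ)
    (hshort : ∀ X : Set B, IsChain (· ≤ ·) X → #X < θ) : baLengthPlus B = θ := by
  refine le_antisymm (ciSup_le' fun X => Order.succ_le_of_lt (hshort X.1 X.2))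
    (not_lt.1 fun h => ?_)
  obtain ⟨X, hX, hXc⟩ := hlong _ h
  have : Order.succ #X ≤ baLengthPlus B :=
    le_ciSup bddAbove_of_small (⟨X, hX⟩ : {X : Set B // IsChain (· ≤ ·) X})
  exact (Order.lt_succ _).not_ge (hXc ▸ this)

end Length

/-- for every weakly inaccessible `θ` there is a Boolean algebra of
cardinality `θ` with chains of every cardinality `< θ` but no chain of cardinality `θ`;
so `Length(B) = Length⁺(B) = θ` and the supremum is not attained. -/
theorem statement_6 (θ : Cardinal.{u}) (hθ : IsWeaklyInaccessible θ) :
    ∃ (B : Type u) (inst : BooleanAlgebra B),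
      #B = θ ∧
      (∀ μ < θ, ∃ X : Set B, IsChain (· ≤ ·) X ∧ #X = μ) ∧
      (∀ X : Set B, IsChain (· ≤ ·) X → #X < θ) ∧
      @baLength B inst = θ ∧ @baLengthPlus B inst = θ := by
  classical
  obtain ⟨hθ₀, hθ, hlim⟩ := hθ
  let α (i : θ.ord.ToType) : Type u := intervalAlgebra (Iio i)
  have hα (i) : #(α i) < θ :=
    mk_intervalAlgebra_le.trans_lt (max_lt hθ₀ (by simpa using mk_Iio_lt i))
  let W := BooleanSubalgebra.weakPi (α := α) cofinite
  have hlong : ∀ μ < θ, ∃ X : Set W, IsChain (· ≤ ·) X ∧ #X = μ := by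
    intro μ hμ
    obtain ⟨i, rfl⟩ := exists_mk_Iio_ord_toType_eq hμ
    obtain ⟨X, hX, hXc⟩ := exists_isChain_intervalAlgebra (γ := Iio i)
    let e := BooleanSubalgebra.weakPiSingle (α := α) i
    exact ⟨e '' X, hX.image e, (mk_image_eq e.injective).trans hXc⟩
  have hshort (X : Set W) (hX : IsChain (· ≤ ·) X) : #X < θ :=
    BooleanSubalgebra.mk_lt_of_isChain_weakPi_cofinite hθ hθ₀ hα hX
  have hlength := baLength_eq_of_isChain hlim hlong hshort
  refine ⟨W, inferInstance, ?_, hlong, hshort, hlength, baLengthPlus_eq_of_isChain hlong hshort⟩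
  exact le_antisymm (BooleanSubalgebra.mk_weakPi_cofinite_le hθ.aleph0_le (mk_ord_toType θ).le hα)
    (hlength.ge.trans baLength_le_mk)

end ShSi641
end

section
/- For every weakly inaccessible cardinal θ there exists a Boolean algebra B of cardinality θ such that B has an antichain of every cardinality μ < θ, but every antichain of B has cardinality < θ; in other words, c(B) = c⁺(B) = θ and the supremum in the definition of cellularity is not attained. -/
open Cardinal Filter

universe u

namespace ShSi641

variable {ι : Type u}

/-!
Take for `B` the algebra of subsets of `∏_{i < θ} V i`, with `|V i| = |i| + 1`, generated by the
cylinders `{p | p i = v}`. The cylinders at a fixed coordinate `i` form an antichain of size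
`|V i|`, and these sizes exhaust the cardinals below `θ`. Every element is a Boolean combination
of finitely many cylinders, so `|B| ≤ θ`. Finally, given `θ` pairwise disjoint elements, pick in
each a point and a finite support: as `θ` is regular uncountable and each `|V i| < θ`, a
Δ-system argument yields two whose points agree on their common coordinates, and gluing the two
points gives a point of both elements.
-/

open Set

section FiniteSupport

variable {α ι : Type u}

/-- `s` is a Boolean combination of the generators `G j`, `j ∈ F`. -/
def IsSupportedOn (G : ι → Set α) (s : Set α) (F : Finset ι) : Prop :=
  ∀ p q, (∀ j ∈ F, p ∈ G j ↔ q ∈ G j) → (p ∈ s ↔ q ∈ s)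

namespace IsSupportedOn

variable {G : ι → Set α} {s t : Set α} {F F' : Finset ι}

theorem mono (h : IsSupportedOn G s F) (hF : F ⊆ F') : IsSupportedOn G s F' :=
  fun p q hpq => h p q fun j hj => hpq j (hF hj)

theorem compl (h : IsSupportedOn G s F) : IsSupportedOn G sᶜ F :=
  fun p q hpq => not_congr (h p q hpq)

theorem union [DecidableEq ι] (hs : IsSupportedOn G s F) (ht : IsSupportedOn G t F') :
    IsSupportedOn G (s ∪ t) (F ∪ F') := fun p q hpq =>
  or_congr (hs.mono Finset.subset_union_left p q hpq) (ht.mono Finset.subset_union_right p q hpq)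

theorem inter [DecidableEq ι] (hs : IsSupportedOn G s F) (ht : IsSupportedOn G t F') :
    IsSupportedOn G (s ∩ t) (F ∪ F') := fun p q hpq =>
  and_congr (hs.mono Finset.subset_union_left p q hpq) (ht.mono Finset.subset_union_right p q hpq)

end IsSupportedOn

def finiteSupportAlgebra (G : ι → Set α) : BooleanSubalgebra (Set α) where
  carrier := {s | ∃ F, IsSupportedOn G s F}
  supClosed' := by classical exact fun _ ⟨_, hs⟩ _ ⟨_, ht⟩ => ⟨_, hs.union ht⟩
  infClosed' := by classical exact fun _ ⟨_, hs⟩ _ ⟨_, ht⟩ => ⟨_, hs.inter ht⟩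
  compl_mem' := fun ⟨_, hs⟩ => ⟨_, hs.compl⟩
  bot_mem' := ⟨∅, fun _ _ _ => Iff.rfl⟩

/-- A set supported on `F` is recovered from `F` and the finitely many membership patterns
`F → Prop` of its points. -/
theorem mk_finiteSupportAlgebra_le (G : ι → Set α) : #(finiteSupportAlgebra G) ≤ max ℵ₀ #ι := by
  classical
  let pattern (F : Finset ι) (p : α) : F → Prop := fun j => p ∈ G j
  let decode : (Σ F : Finset ι, Set (F → Prop)) → Set α := fun S => pattern S.1 ⁻¹' S.2
  have hencode : ∀ s : finiteSupportAlgebra G, ∃ S, decode S = s := by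
    rintro ⟨s, F, hs⟩
    refine ⟨⟨F, pattern F '' s⟩, Set.ext fun p => ⟨?_, fun hp => ⟨p, hp, rfl⟩⟩⟩
    rintro ⟨q, hq, hqp⟩
    exact (hs q p fun j hj => iff_of_eq (congrFun hqp ⟨j, hj⟩)).1 hq
  choose encode hencode using hencode
  have hinj : Function.Injective encode := fun s t h =>
    Subtype.ext <| by rw [← hencode s, ← hencode t, h]
  calc #(finiteSupportAlgebra G) ≤ #(Σ F : Finset ι, Set (F → Prop)) := mk_le_of_injective hinj
    _ ≤ #(Finset ι) * ℵ₀ := by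
        rw [mk_sigma, ← sum_const']
        exact sum_le_sum _ _ fun F => (lt_aleph0_of_finite _).le
    _ ≤ max ℵ₀ #ι * ℵ₀ :=
        mul_le_mul_left ((mk_le_of_surjective List.toFinset_surjective).trans (mk_list_le_max ι)) _
    _ ≤ max ℵ₀ #ι := (mul_le_max_of_aleph0_le_left (le_max_left _ _)).trans (by simp)

end FiniteSupport

section Compatible

variable {θ : Cardinal.{u}} {κ I : Type u}

theorem exists_ne_disjoint_of_forall_mk_lt (hreg : θ.IsRegular) (hκ : θ ≤ #κ)
    (D : κ → Finset I) (hD : ∀ i, #{ξ | i ∈ D ξ} < θ) :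
    ∃ ξ η, ξ ≠ η ∧ Disjoint (D ξ) (D η) := by
  obtain ⟨ξ⟩ : Nonempty κ :=
    mk_ne_zero_iff.1 (hreg.pos.trans_le hκ).ne'
  let N : Set κ := insert ξ (⋃ i ∈ (D ξ : Set I), {η | i ∈ D η})
  have hN : #N < θ := by
    refine mk_insert_le.trans_lt (add_lt_of_lt hreg.aleph0_le ?_
      (one_lt_aleph0.trans_le hreg.aleph0_le))
    exact (card_biUnion_lt_iff_forall_of_isRegular hreg
      ((D ξ).finite_toSet.lt_aleph0.trans_le hreg.aleph0_le)).2 fun i _ => hD i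
  obtain ⟨η, hη⟩ : Nᶜ.Nonempty :=
    nonempty_compl.2 fun h => (hN.trans_le hκ).ne (by rw [h, mk_univ])
  simp only [N, mem_compl_iff, mem_insert_iff, mem_iUnion, Finset.mem_coe, not_or,
    not_exists] at hη
  exact ⟨ξ, η, Ne.symm hη.1, Finset.disjoint_left.2 fun i hi hi' => hη.2 i hi hi'⟩

variable {V : I → Type u}

theorem exists_ne_agree_of_card_le (hreg : θ.IsRegular) (hV : ∀ i, #(V i) < θ) (n : ℕ) :
    ∀ {κ : Type u} (D : κ → Finset I) (p : κ → ∀ i, V i), θ ≤ #κ → (∀ ξ, (D ξ).card ≤ n) →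
      ∃ ξ η, ξ ≠ η ∧ ∀ i ∈ D ξ, i ∈ D η → p ξ i = p η i := by
  classical
  induction n with
  | zero =>
    intro κ D p hκ hD
    obtain ⟨ξ, η, hne⟩ : Nontrivial κ :=
      one_lt_iff_nontrivial.1 ((one_lt_aleph0.trans_le hreg.aleph0_le).trans_le hκ)
    refine ⟨ξ, η, hne, fun i hi => ?_⟩
    simp [Finset.card_eq_zero.1 (Nat.le_zero.1 (hD ξ))] at hi
  | succ n ih =>
    intro κ D p hκ hD
    by_cases hlight : ∀ i, #{ξ | i ∈ D ξ} < θ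
    · obtain ⟨ξ, η, hne, hdisj⟩ := exists_ne_disjoint_of_forall_mk_lt hreg hκ D hlight
      exact ⟨ξ, η, hne, fun i hi hi' => absurd hi' (Finset.disjoint_left.1 hdisj hi)⟩
    simp only [not_forall, not_lt] at hlight
    obtain ⟨i, hi⟩ := hlight
    -- θ many of the supports through `i` also agree at `i`; drop `i` and recurse.
    obtain ⟨v, hv⟩ := infinite_pigeonhole_card (fun ξ : {ξ | i ∈ D ξ} => p ξ i) θ hi
      hreg.aleph0_le (hreg.cof_ord.symm ▸ hV i)
    obtain ⟨ξ, η, hne, hagree⟩ := ih (fun ξ : _ ⁻¹' {v} => (D ξ.1.1).erase i)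
      (fun ξ => p ξ.1.1) hv fun ξ => by
        rw [Finset.card_erase_of_mem ξ.1.2]; have := hD ξ.1.1; omega
    refine ⟨ξ.1.1, η.1.1, fun h => hne (Subtype.ext (Subtype.ext h)), fun j hj hj' => ?_⟩
    by_cases hji : j = i
    · subst hji; exact ξ.2.trans η.2.symm
    · exact hagree j (Finset.mem_erase.2 ⟨hji, hj⟩) (Finset.mem_erase.2 ⟨hji, hj'⟩)

/-- Δ-system lemma for the finite partial functions `p ξ ↾ D ξ`. -/
theorem exists_ne_agree (hreg : θ.IsRegular) (hθ : ℵ₀ < θ) (hV : ∀ i, #(V i) < θ)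
    (hκ : θ ≤ #κ) (D : κ → Finset I) (p : κ → ∀ i, V i) :
    ∃ ξ η, ξ ≠ η ∧ ∀ i ∈ D ξ, i ∈ D η → p ξ i = p η i := by
  obtain ⟨n, hn⟩ := infinite_pigeonhole_card (fun ξ => ULift.up.{u} (D ξ).card) θ hκ
    hreg.aleph0_le (by rwa [hreg.cof_ord, mk_uLift, mk_nat, lift_aleph0])
  obtain ⟨ξ, η, hne, hagree⟩ := exists_ne_agree_of_card_le hreg hV n.down
    (fun ξ : _ ⁻¹' {n} => D ξ) (fun ξ => p ξ) hn fun ξ => (congrArg ULift.down ξ.2).le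
  exact ⟨ξ, η, Subtype.coe_injective.ne hne, hagree⟩

end Compatible

section Cylinders

variable {I : Type u} (V : I → Type u)

/-- The free product of the finite–cofinite algebras on the `V i`. -/
abbrev cylinderAlgebra : BooleanSubalgebra (Set (∀ i, V i)) :=
  finiteSupportAlgebra fun a : Σ i, V i => {p | p a.1 = a.2}

variable {V}

def cylinder (i : I) (v : V i) : cylinderAlgebra V :=
  ⟨{p | p i = v}, {⟨i, v⟩}, fun _ _ h => h ⟨i, v⟩ (Finset.mem_singleton_self _)⟩

theorem cylinder_injective [∀ i, Nonempty (V i)] (i : I) :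
    Function.Injective (cylinder (V := V) i) := by
  classical
  intro v w h
  have hv : Function.update (fun j => Classical.arbitrary (V j)) i v ∈ (cylinder i v : Set _) := by
    simp [cylinder]
  rw [h] at hv
  simpa [cylinder] using hv

theorem cylinder_ne_bot [∀ i, Nonempty (V i)] (i : I) (v : V i) : cylinder i v ≠ ⊥ := by
  classical
  intro h
  have hv : Function.update (fun j => Classical.arbitrary (V j)) i v ∈ (cylinder i v : Set _) := by
    simp [cylinder]
  rw [h] at hv
  exact hv

theorem cylinder_inf_cylinder {i : I} {v w : V i} (hvw : v ≠ w) :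
    cylinder i v ⊓ cylinder i w = ⊥ :=
  Subtype.ext <| Set.eq_empty_of_forall_notMem fun _ ⟨hv, hw⟩ => hvw (hv.symm.trans hw)

theorem cylinderAlgebra.exists_isBAAntichain_mk_eq [∀ i, Nonempty (V i)] (i : I)
    {μ : Cardinal.{u}} (hμ : μ ≤ #(V i)) :
    ∃ X : Set (cylinderAlgebra V), IsBAAntichain X ∧ #X = μ := by
  obtain ⟨S, rfl⟩ := le_mk_iff_exists_set.1 hμ
  refine ⟨cylinder i '' S, ⟨?_, ?_⟩, mk_image_eq (cylinder_injective i)⟩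
  · rintro _ ⟨v, -, rfl⟩
    exact cylinder_ne_bot i v
  · rintro _ ⟨v, -, rfl⟩ _ ⟨w, -, rfl⟩ hne
    exact cylinder_inf_cylinder fun h => hne (h ▸ rfl)

theorem cylinderAlgebra.mk_lt_of_isBAAntichain {θ : Cardinal.{u}} (hreg : θ.IsRegular)
    (hθ : ℵ₀ < θ) (hV : ∀ i, #(V i) < θ) {X : Set (cylinderAlgebra V)} (hX : IsBAAntichain X) :
    #X < θ := by
  classical
  by_contra! hXθ
  have hsupp : ∀ x : X, ∃ F p, IsSupportedOn _ (x : Set (∀ i, V i)) F ∧ p ∈ (x : Set _) :=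
    fun x => let ⟨F, hF⟩ := x.1.2
      let ⟨p, hp⟩ := Set.nonempty_iff_ne_empty.2 fun h =>
        hX.1 x x.2 (Subtype.ext h)
      ⟨F, p, hF, hp⟩
  choose F p hF hp using hsupp
  let D x := (F x).image Sigma.fst
  obtain ⟨ξ, η, hne, hagree⟩ := exists_ne_agree hreg hθ hV hXθ D p
  let q : ∀ i, V i := fun i => if i ∈ D ξ then p ξ i else p η i
  have hqξ : q ∈ (ξ : Set (∀ i, V i)) := by
    refine (hF ξ q (p ξ) fun a ha => ?_).2 (hp ξ)
    have hqa : q a.1 = p ξ a.1 := if_pos (Finset.mem_image_of_mem Sigma.fst ha)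
    exact iff_of_eq (congrArg (· = a.2) hqa)
  have hqη : q ∈ (η : Set (∀ i, V i)) := by
    refine (hF η q (p η) fun a ha => ?_).2 (hp η)
    have haη : a.1 ∈ D η := Finset.mem_image_of_mem Sigma.fst ha
    have hqa : q a.1 = p η a.1 := by
      by_cases haξ : a.1 ∈ D ξ
      · exact (if_pos haξ).trans (hagree a.1 haξ haη)
      · exact if_neg haξ
    exact iff_of_eq (congrArg (· = a.2) hqa)
  have hq : q ∈ ((ξ.1 ⊓ η.1 : cylinderAlgebra V) : Set (∀ i, V i)) := ⟨hqξ, hqη⟩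
  rw [hX.2 ξ.2 η.2 (Subtype.coe_injective.ne hne)] at hq
  exact hq

end Cylinders

section Cellularity

variable {B : Type u} [BooleanAlgebra B] {θ : Cardinal.{u}}

theorem mk_le_baCellularity {X : Set B} (hX : IsBAAntichain X) : #X ≤ baCellularity B :=
  le_ciSup bddAbove_of_small (⟨X, hX⟩ : {X : Set B // IsBAAntichain X})

theorem baCellularity_le_mk : baCellularity B ≤ #B :=
  ciSup_le' fun _ => mk_set_le _

theorem le_baCellularity (hθ : Order.IsSuccLimit θ)
    (hex : ∀ μ < θ, ∃ X : Set B, IsBAAntichain X ∧ #X = μ) : θ ≤ baCellularity B :=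
  hθ.le_iff_forall_le.2 fun μ hμ => by
    obtain ⟨X, hX, rfl⟩ := hex μ hμ
    exact mk_le_baCellularity hX

theorem baCellularity_le_baCellularityPlus : baCellularity B ≤ baCellularityPlus B :=
  ciSup_mono bddAbove_of_small fun _ => Order.le_succ _

theorem baCellularityPlus_le (hlt : ∀ X : Set B, IsBAAntichain X → #X < θ) :
    baCellularityPlus B ≤ θ :=
  ciSup_le' fun X => Order.succ_le_of_lt (hlt X.1 X.2)

end Cellularity

section Coordinates

variable {θ : Cardinal.{u}}

theorem mk_option_Iio_lt (hθ : ℵ₀ ≤ θ) (i : θ.ord.ToType) : #(Option (Iio i)) < θ := by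
  rw [mk_option]
  exact add_lt_of_lt hθ (by simpa using mk_Iio_lt i) (one_lt_aleph0.trans_le hθ)

theorem exists_le_mk_option_Iio {μ : Cardinal.{u}} (hμ : μ < θ) :
    ∃ i : θ.ord.ToType, μ ≤ #(Option (Iio i)) := by
  obtain ⟨i, hi⟩ := Ordinal.typein_surj (α := θ.ord.ToType) (· < ·)
    (show μ.ord < _ by rwa [Ordinal.type_toType, ord_lt_ord])
  have hIio : #(Iio i) = (Ordinal.typein (α := θ.ord.ToType) (· < ·) i).card := rfl
  refine ⟨i, le_trans (le_of_eq ?_) (mk_option ▸ le_self_add)⟩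
  simp [hIio, hi]

theorem mk_sigma_option_Iio_le (hθ : ℵ₀ ≤ θ) : #(Σ i : θ.ord.ToType, Option (Iio i)) ≤ θ :=
  calc #(Σ i : θ.ord.ToType, Option (Iio i))
      ≤ #(θ.ord.ToType) * ⨆ i : θ.ord.ToType, #(Option (Iio i)) :=
        mk_sigma _ ▸ sum_le_mk_mul_iSup _
    _ ≤ θ * θ := by
        rw [mk_ord_toType]
        exact mul_le_mul_right (ciSup_le' fun i => (mk_option_Iio_lt hθ i).le) _
    _ = θ := mul_eq_self hθ

end Coordinates

/-- for every weakly inaccessible `θ` there is a Boolean algebra of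
cardinality `θ` with antichains of every cardinality `< θ` but with every antichain of
cardinality `< θ`; so `c(B) = c⁺(B) = θ` and the supremum is not attained. -/
theorem statement_11 (θ : Cardinal.{u}) (hθ : IsWeaklyInaccessible θ) :
    ∃ (B : Type u) (inst : BooleanAlgebra B),
      #B = θ ∧
      (∀ μ < θ, ∃ X : Set B, IsBAAntichain X ∧ #X = μ) ∧
      (∀ X : Set B, IsBAAntichain X → #X < θ) ∧
      @baCellularity B inst = θ ∧ @baCellularityPlus B inst = θ := by
  obtain ⟨hℵ, hreg, hlim⟩ := hθ
  let B := cylinderAlgebra fun i : θ.ord.ToType => Option (Iio i)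
  have hex : ∀ μ < θ, ∃ X : Set B, IsBAAntichain X ∧ #X = μ := fun μ hμ =>
    let ⟨i, hi⟩ := exists_le_mk_option_Iio hμ
    cylinderAlgebra.exists_isBAAntichain_mk_eq i hi
  have hlt : ∀ X : Set B, IsBAAntichain X → #X < θ := fun X =>
    cylinderAlgebra.mk_lt_of_isBAAntichain hreg hℵ (mk_option_Iio_lt hℵ.le)
  have hcell : baCellularity B = θ :=
    le_antisymm (baCellularity_le_baCellularityPlus.trans (baCellularityPlus_le hlt))
      (le_baCellularity hlim hex)
  have hcard : #B ≤ θ :=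
    (mk_finiteSupportAlgebra_le _).trans (max_le hℵ.le (mk_sigma_option_Iio_le hℵ.le))
  refine ⟨B, inferInstance, le_antisymm hcard (hcell.ge.trans baCellularity_le_mk), hex, hlt,
    hcell, ?_⟩
  exact le_antisymm (baCellularityPlus_le hlt) (hcell.ge.trans baCellularity_le_baCellularityPlus)

end ShSi641
end
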